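/- arXiv:1612.05113 — 4 statements merged into one kernel-verified Lean document; each statement's English description precedes it below -/
import Mathlib

section
/- (Cone Differentiation Theorem.) For every integrable function f : ℝⁿ → ℝ, for Lebesgue-almost every x ∈ ℝⁿ, the averages V_{t,…,t}(x) (all scales equal to t) converge to f(x) as t → 0⁺; that is, f(x) = lim_{t → 0⁺} (1/(tⁿ |det(v₁,…,vₙ)|)) · Σ_{α ∈ {−1/2,1/2}ⁿ} sgn(α₁⋯αₙ) F(x + t(α₁v₁ + ⋯ + αₙvₙ)) for almost every x. -/
/-!
In the coordinates `T c = ∑ cᵢ vᵢ` the cone `C(∑ wᵢ vᵢ)` becomes the orthant `Iic w`, and by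
inclusion–exclusion the alternating sum of the orthant integrals over the corners of the cube
`∏ (wᵢ - t/2, wᵢ + t/2]` is the integral over that cube, a sup-norm ball of volume `tⁿ`.
After the Jacobian factor `|det|` cancels, `V_{t,…,t}` is the average of `f ∘ T` over the ball,
so Lebesgue's differentiation theorem applies; a linear isomorphism preserves null sets, which
carries the almost-everywhere statement back to the original coordinates.
-/

open MeasureTheory Filter Set
open scoped Topology

/-- The negative cone at `z` with respect to the basis vectors `v`. -/
def negCone (n : ℕ) (v : Fin n → (Fin n → ℝ)) (z : Fin n → ℝ) : Set (Fin n → ℝ) :=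
  {y | ∃ c : Fin n → ℝ, (∀ i, 0 ≤ c i) ∧ y = z - ∑ i, c i • v i}

/-- The cone integral `F(z) = ∫_{C(z)} f dμ`. -/
noncomputable def coneIntegral (n : ℕ) (v : Fin n → (Fin n → ℝ)) (f : (Fin n → ℝ) → ℝ)
    (z : Fin n → ℝ) : ℝ :=
  ∫ y in negCone n v z, f y

section InclusionExclusion

variable {ι : Type*} [Fintype ι] [DecidableEq ι]

theorem sum_sign_mul_indicator_Iic_corner {a b : ι → ℝ} (hab : a ≤ b) (y : ι → ℝ) :
    ∑ s : ι → Bool, (∏ i, if s i then (1 : ℝ) else -1) *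
        (Iic fun i => if s i then b i else a i).indicator 1 y
      = (univ.pi fun i => Ioc (a i) (b i)).indicator 1 y := by
  have hcoord (i : ι) : (Ioc (a i) (b i)).indicator 1 (y i)
      = ∑ j : Bool, (if j then (1 : ℝ) else -1) *
          (Iic (if j then b i else a i)).indicator 1 (y i) := by
    rw [← Iic_sdiff_Iic, indicator_sdiff (Iic_subset_Iic.2 (hab i))]
    simp [sub_eq_add_neg]
  simp_rw [← pi_univ_Iic, ← Finset.coe_univ, indicator_pi_one_apply, hcoord, Finset.prod_univ_sum,
    Fintype.piFinset_univ, Finset.prod_mul_distrib]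

theorem sum_sign_mul_setIntegral_Iic_corner {μ : Measure (ι → ℝ)} {g : (ι → ℝ) → ℝ}
    (hg : Integrable g μ) {a b : ι → ℝ} (hab : a ≤ b) :
    ∑ s : ι → Bool, (∏ i, if s i then (1 : ℝ) else -1) *
        ∫ y in Iic (fun i => if s i then b i else a i), g y ∂μ
      = ∫ y in univ.pi fun i => Ioc (a i) (b i), g y ∂μ := by
  have hind (t : Set (ι → ℝ)) (y : ι → ℝ) : t.indicator g y = t.indicator 1 y * g y := by
    by_cases hy : y ∈ t <;> simp [hy]
  calc _ = ∑ s : ι → Bool, ∫ y, (∏ i, if s i then (1 : ℝ) else -1) *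
          (Iic fun i => if s i then b i else a i).indicator 1 y * g y ∂μ := by
        simp_rw [← integral_indicator measurableSet_Iic, ← integral_const_mul, hind, mul_assoc]
    _ = ∫ y, (∑ s : ι → Bool, (∏ i, if s i then (1 : ℝ) else -1) *
          (Iic fun i => if s i then b i else a i).indicator 1 y) * g y ∂μ := by
        simp_rw [Finset.sum_mul]
        refine (integral_finsetSum _ fun s _ => ?_).symm
        simp_rw [mul_assoc, ← hind]
        exact (hg.indicator measurableSet_Iic).const_mul _
    _ = _ := by
        simp_rw [sum_sign_mul_indicator_Iic_corner hab, ← hind]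
        exact integral_indicator (MeasurableSet.univ_pi fun i => measurableSet_Ioc)

end InclusionExclusion

section Haar

variable {E : Type*} [NormedAddCommGroup E] [NormedSpace ℝ E] [FiniteDimensional ℝ E]
  [MeasurableSpace E] [BorelSpace E] {μ : Measure E} [μ.IsAddHaarMeasure]

theorem ContinuousLinearEquiv.ae_of_ae_comp (e : E ≃L[ℝ] E) {p : E → Prop}
    (h : ∀ᵐ x ∂μ, p (e x)) : ∀ᵐ x ∂μ, p x := by
  have hdet : (e.symm : E →L[ℝ] E).det ≠ 0 := (LinearEquiv.isUnit_det' _).ne_zero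
  simpa using (Measure.ContinuousLinearMap.quasiMeasurePreserving μ _ hdet).ae h

theorem MeasureTheory.Integrable.comp_continuousLinearEquiv {F : Type*} [NormedAddCommGroup F]
    {f : E → F} (hf : Integrable f μ) (e : E ≃L[ℝ] E) : Integrable (fun x => f (e x)) μ := by
  have hdet : LinearMap.det (e : E →ₗ[ℝ] E) ≠ 0 := (LinearEquiv.isUnit_det' _).ne_zero
  have hmap := μ.map_linearMap_addHaar_eq_smul_addHaar hdet
  refine (e.toHomeomorph.toMeasurableEquiv.measurableEmbedding.integrable_map_iff.mp ?_ :
    Integrable (f ∘ e) μ)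
  rw [show ⇑e.toHomeomorph.toMeasurableEquiv = ⇑(e : E →ₗ[ℝ] E) from rfl, hmap]
  exact hf.smul_measure ENNReal.ofReal_ne_top

end Haar

theorem IsUnifLocDoublingMeasure.ae_tendsto_setAverage_closedBall {α E : Type*}
    [PseudoMetricSpace α] [MeasurableSpace α] [SecondCountableTopology α] [BorelSpace α]
    {μ : Measure α} [IsUnifLocDoublingMeasure μ] [IsLocallyFiniteMeasure μ]
    [NormedAddCommGroup E] [NormedSpace ℝ E] [CompleteSpace E] {g : α → E}
    (hg : LocallyIntegrable g μ) :
    ∀ᵐ x ∂μ, Tendsto (fun r => ⨍ y in Metric.closedBall x r, g y ∂μ) (𝓝[>] 0) (𝓝 (g x)) := by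
  filter_upwards [IsUnifLocDoublingMeasure.ae_tendsto_average μ hg 1] with x hx
  refine hx (fun _ => x) id tendsto_id (eventually_mem_nhdsWithin.mono fun r hr => ?_)
  exact Metric.mem_closedBall_self (by simpa using hr.out.le)

theorem setIntegral_pi_Ioc_eq_setIntegral_closedBall {ι : Type*} [Fintype ι] {g : (ι → ℝ) → ℝ}
    (w : ι → ℝ) {r : ℝ} (hr : 0 ≤ r) :
    ∫ y in univ.pi fun i => Ioc (w i - r) (w i + r), g y = ∫ y in Metric.closedBall w r, g y := by
  rw [closedBall_pi _ hr]
  simp_rw [Real.closedBall_eq_Icc]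
  rw [pi_univ_Icc]
  refine setIntegral_congr_set ?_
  rw [volume_pi]
  exact Measure.univ_pi_Ioc_ae_eq_Icc

theorem LinearMap.det_fintypeLinearCombination {ι : Type*} [Fintype ι] [DecidableEq ι]
    (v : ι → ι → ℝ) : LinearMap.det (Fintype.linearCombination ℝ v) = (Matrix.of v).det := by
  rw [← LinearMap.det_toMatrix', ← Matrix.det_transpose]
  congr 1
  ext i j
  simp [LinearMap.toMatrix'_apply, Fintype.linearCombination_apply, Pi.single_apply, ite_apply]

section Cone

variable {n : ℕ} {v : Fin n → Fin n → ℝ}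

theorem negCone_fintypeLinearCombination (w : Fin n → ℝ) :
    negCone n v (Fintype.linearCombination ℝ v w) = Fintype.linearCombination ℝ v '' Iic w := by
  ext y
  simp only [negCone, mem_ofPred_eq, mem_image, mem_Iic, ← Fintype.linearCombination_apply ℝ v]
  constructor
  · rintro ⟨c, hc, rfl⟩
    exact ⟨w - c, sub_le_self w hc, map_sub _ _ _⟩
  · rintro ⟨u, hu, rfl⟩
    exact ⟨w - u, sub_nonneg.mpr hu, by rw [map_sub, sub_sub_cancel]⟩

theorem coneIntegral_fintypeLinearCombination (hv : LinearIndependent ℝ v)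
    (f : (Fin n → ℝ) → ℝ) (w : Fin n → ℝ) :
    coneIntegral n v f (Fintype.linearCombination ℝ v w)
      = |(Matrix.of v).det| * ∫ y in Iic w, f (Fintype.linearCombination ℝ v y) := by
  set T := LinearMap.toContinuousLinearMap (Fintype.linearCombination ℝ v)
  have hT : ∀ x ∈ Iic w, HasFDerivWithinAt (Fintype.linearCombination ℝ v) T (Iic w) x :=
    fun x _ => T.hasFDerivAt.hasFDerivWithinAt
  rw [coneIntegral, negCone_fintypeLinearCombination,
    integral_image_eq_integral_abs_det_fderiv_smul volume measurableSet_Iic hT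
      hv.fintypeLinearCombination_injective.injOn, integral_smul]
  simp [T, LinearMap.det_fintypeLinearCombination]

theorem sum_sign_mul_coneIntegral_eq_setIntegral_closedBall (hv : LinearIndependent ℝ v)
    {f : (Fin n → ℝ) → ℝ} (hf : Integrable fun y => f (Fintype.linearCombination ℝ v y))
    (w : Fin n → ℝ) {t : ℝ} (ht : 0 ≤ t) :
    ∑ s : Fin n → Bool, (∏ i, if s i then (1 : ℝ) else -1) *
        coneIntegral n v f
          (Fintype.linearCombination ℝ v w + t • ∑ i, (if s i then (1 : ℝ) / 2 else -1 / 2) • v i)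
      = |(Matrix.of v).det| *
          ∫ y in Metric.closedBall w (t / 2), f (Fintype.linearCombination ℝ v y) := by
  set a : Fin n → ℝ := fun i => w i - t / 2
  set b : Fin n → ℝ := fun i => w i + t / 2
  have hcorner (s : Fin n → Bool) :
      Fintype.linearCombination ℝ v w + t • ∑ i, (if s i then (1 : ℝ) / 2 else -1 / 2) • v i
        = Fintype.linearCombination ℝ v fun i => if s i then b i else a i := by
    have : (fun i => if s i then b i else a i)
        = w + t • fun i => if s i then (1 : ℝ) / 2 else -1 / 2 := by
      ext i; by_cases hs : s i <;> simp [a, b, hs] <;> ring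
    simp only [this, map_add, map_smul, Fintype.linearCombination_apply]
  have hab : a ≤ b := fun i => by simp only [a, b]; linarith
  simp_rw [hcorner, coneIntegral_fintypeLinearCombination hv, mul_left_comm _ |(Matrix.of v).det|,
    ← Finset.mul_sum, sum_sign_mul_setIntegral_Iic_corner hf hab, a, b,
    setIntegral_pi_Ioc_eq_setIntegral_closedBall w (by positivity : 0 ≤ t / 2)]

end Cone

/-- Cone Differentiation Theorem: the symmetric averages `V_{t,…,t}(x)` built from the
alternating corner sums of `F` converge to `f(x)` as `t → 0⁺`, for a.e. `x`. -/
theorem stmt1 (n : ℕ) (v : Fin n → (Fin n → ℝ)) (hv : LinearIndependent ℝ v)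
    (f : (Fin n → ℝ) → ℝ) (hf : Integrable f) :
    ∀ᵐ x : Fin n → ℝ, Tendsto (fun t : ℝ =>
        (1 / (t ^ n * |(Matrix.of v).det|)) *
          ∑ s : Fin n → Bool, (∏ i, if s i then (1:ℝ) else -1) *
            coneIntegral n v f (x + t • ∑ i, (if s i then (1:ℝ)/2 else -1/2) • v i))
      (𝓝[>] 0) (𝓝 (f x)) := by
  have hdet : (Matrix.of v).det ≠ 0 :=
    ((Matrix.isUnit_iff_isUnit_det _).mp (Matrix.linearIndependent_rows_iff_isUnit.mp hv)).ne_zero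
  let e := (LinearEquiv.ofInjectiveEndo _
    hv.fintypeLinearCombination_injective).toContinuousLinearEquiv
  have hg : Integrable fun y => f (Fintype.linearCombination ℝ v y) :=
    hf.comp_continuousLinearEquiv e
  have hhalf : Tendsto (fun t : ℝ => t / 2) (𝓝[>] 0) (𝓝[>] 0) :=
    tendsto_nhdsWithin_of_tendsto_nhds_of_eventually_within _
      (((continuous_id.div_const 2).tendsto' 0 0 (zero_div 2)).mono_left nhdsWithin_le_nhds)
      (eventually_mem_nhdsWithin.mono fun t (ht : 0 < t) => half_pos ht)
  refine e.ae_of_ae_comp ?_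
  filter_upwards [IsUnifLocDoublingMeasure.ae_tendsto_setAverage_closedBall hg.locallyIntegrable]
    with w hw
  refine (hw.comp hhalf).congr' (eventually_mem_nhdsWithin.mono fun t (ht : 0 < t) => ?_)
  dsimp only [Function.comp_apply]
  rw [show e w = Fintype.linearCombination ℝ v w from rfl,
    sum_sign_mul_coneIntegral_eq_setIntegral_closedBall hv hg w ht.le, setAverage_eq,
    measureReal_def, Real.volume_pi_closedBall _ (by positivity),
    ENNReal.toReal_ofReal (by positivity), Fintype.card_fin, smul_eq_mul,
    mul_div_cancel₀ _ two_ne_zero]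
  field_simp
end

section
/- Let f : ℝⁿ → ℝ be integrable and let α = (v₁ + ⋯ + vₙ)/‖v₁ + ⋯ + vₙ‖ be the unit vector in the central direction of the positive cone. Then as the base point moves to infinity along the direction α, the cone integral exhausts the whole space: lim_{t → +∞} F(tα) = ∫_{ℝⁿ} f dμ. -/
open MeasureTheory Filter Set
open scoped Topology

/-- The negative cone at `z` with respect to the basis vectors `v` in Euclidean space. -/
def negConeE (n : ℕ) (v : Fin n → EuclideanSpace ℝ (Fin n)) (z : EuclideanSpace ℝ (Fin n)) :
    Set (EuclideanSpace ℝ (Fin n)) :=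
  {y | ∃ c : Fin n → ℝ, (∀ i, 0 ≤ c i) ∧ y = z - ∑ i, c i • v i}

/-- The cone integral `F(z) = ∫_{C(z)} f dμ`. -/
noncomputable def coneIntegralE (n : ℕ) (v : Fin n → EuclideanSpace ℝ (Fin n))
    (f : EuclideanSpace ℝ (Fin n) → ℝ) (z : EuclideanSpace ℝ (Fin n)) : ℝ :=
  ∫ y in negConeE n v z, f y

/-- As the base point moves to infinity along the central direction
`α = (v₁ + ⋯ + vₙ)/‖v₁ + ⋯ + vₙ‖` of the positive cone, the cone integral tends to
the integral of `f` over all of `ℝⁿ`. -/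
theorem stmt4 (n : ℕ) (v : Fin n → EuclideanSpace ℝ (Fin n)) (hv : LinearIndependent ℝ v)
    (f : EuclideanSpace ℝ (Fin n) → ℝ) (hf : Integrable f) :
    Tendsto (fun t : ℝ => coneIntegralE n v f (t • ((‖∑ i, v i‖)⁻¹ • ∑ i, v i)))
      atTop (𝓝 (∫ y, f y)) := by
  classical
  set a : ℝ := (‖∑ i, v i‖)⁻¹ with ha
  set α : EuclideanSpace ℝ (Fin n) := a • ∑ i, v i with hα
  have ha0 : 0 ≤ a := by positivity
  -- monotonicity of the cones
  have hmono : Monotone fun t : ℝ => negConeE n v (t • α) := by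
    intro s t hst y hy
    obtain ⟨c, hc, rfl⟩ := hy
    refine ⟨fun i => c i + (t - s) * a, fun i =>
      add_nonneg (hc i) (mul_nonneg (sub_nonneg.2 hst) ha0), ?_⟩
    have key : (t - s) • α = ∑ i, ((t - s) * a) • v i := by
      simp only [hα, Finset.smul_sum, smul_smul]
    have h1 : ∑ i, (c i + (t - s) * a) • v i
        = (∑ i, c i • v i) + (t • α - s • α) := by
      simp only [add_smul, Finset.sum_add_distrib]
      rw [← key, sub_smul]
    rw [h1]
    abel
  -- measurability of the cones
  have hmeas : ∀ z, MeasurableSet (negConeE n v z) := by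
    intro z
    let L : (Fin n → ℝ) →ₗ[ℝ] EuclideanSpace ℝ (Fin n) :=
      { toFun := fun c => ∑ i, c i • v i
        map_add' := by intro x y; simp [add_smul, Finset.sum_add_distrib]
        map_smul' := by intro m x; simp [smul_smul, Finset.smul_sum] }
    have hLinj : Function.Injective L := by
      intro c c' h
      have h0 : ∑ i, (c i - c' i) • v i = 0 := by
        have : (∑ i, c i • v i) - ∑ i, c' i • v i = 0 := by
          rw [show (∑ i, c i • v i) = L c from rfl, show (∑ i, c' i • v i) = L c' from rfl, h]
          simp
        simpa [sub_smul, Finset.sum_sub_distrib] using this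
      have := Fintype.linearIndependent_iff.mp hv _ h0
      funext i
      have hi := this i
      linarith [hi]
    have hK : IsClosed {c : Fin n → ℝ | ∀ i, 0 ≤ c i} := by
      have : {c : Fin n → ℝ | ∀ i, 0 ≤ c i} = ⋂ i, {c : Fin n → ℝ | 0 ≤ c i} := by
        ext; simp
      rw [this]
      exact isClosed_iInter fun i => isClosed_le continuous_const (continuous_apply i)
    have hmap : IsClosed (L '' {c : Fin n → ℝ | ∀ i, 0 ≤ c i}) :=
      (LinearMap.isClosedEmbedding_of_injective
        (LinearMap.ker_eq_bot.mpr hLinj)).isClosedMap _ hK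
    have hset : negConeE n v z = (fun y => z - y) '' (L '' {c : Fin n → ℝ | ∀ i, 0 ≤ c i}) := by
      ext y
      constructor
      · rintro ⟨c, hc, rfl⟩
        exact ⟨∑ i, c i • v i, ⟨c, hc, rfl⟩, rfl⟩
      · rintro ⟨w, ⟨c, hc, rfl⟩, rfl⟩
        exact ⟨c, hc, rfl⟩
    have hclosed : IsClosed (negConeE n v z) := by
      rw [hset]
      exact (Homeomorph.subLeft z).isClosedMap _ hmap
    exact hclosed.measurableSet
  -- union of the cones is everything
  have hunion : ⋃ t : ℝ, negConeE n v (t • α) = univ := by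
    rw [eq_univ_iff_forall]
    intro y
    rcases Nat.eq_zero_or_pos n with hn | hn
    · subst hn
      refine mem_iUnion.2 ⟨0, fun i => 0, fun i => le_refl 0, ?_⟩
      apply Subsingleton.elim
    · haveI : Nonempty (Fin n) := ⟨⟨0, hn⟩⟩
      have hsum : (∑ i, v i) ≠ 0 := by
        intro h
        have := Fintype.linearIndependent_iff.mp hv (fun _ => 1) (by simp only [one_smul]; exact h) ⟨0, hn⟩
        norm_num at this
      have hapos : 0 < a := inv_pos.mpr (norm_pos_iff.mpr hsum)
      have hcard : Fintype.card (Fin n) = Module.finrank ℝ (EuclideanSpace ℝ (Fin n)) := by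
        rw [Fintype.card_fin, finrank_euclideanSpace_fin]
      let B := basisOfLinearIndependentOfCardEqFinrank hv hcard
      set b : Fin n → ℝ := fun i => B.repr y i with hb
      set t : ℝ := (∑ i, |b i|) / a with htdef
      have hta : t * a = ∑ i, |b i| := by
        rw [htdef, div_mul_cancel₀ _ (ne_of_gt hapos)]
      refine mem_iUnion.2 ⟨t, fun i => t * a - b i, ?_, ?_⟩
      · intro i
        have h1 : b i ≤ ∑ j, |b j| :=
          le_trans (le_abs_self _)
            (Finset.single_le_sum (f := fun j => |b j|) (fun j _ => abs_nonneg _) (Finset.mem_univ i))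
        have h2 : 0 ≤ t * a - b i := by rw [hta]; linarith
        exact h2
      · have hy : ∑ i, b i • v i = y := by
          have h2 := B.sum_repr y
          simpa [B, coe_basisOfLinearIndependentOfCardEqFinrank, hb] using h2
        have htα : t • α = ∑ i, (t * a) • v i := by
          simp only [hα, smul_smul, Finset.smul_sum]
        rw [htα, ← hy]
        simp [sub_smul, Finset.sum_sub_distrib]
  -- apply monotone convergence for set integrals
  have hlim := tendsto_setIntegral_of_monotone (μ := volume) (f := f)
    (fun t : ℝ => hmeas _) hmono (by rw [hunion]; exact hf.integrableOn)
  rw [hunion, setIntegral_univ] at hlim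
  exact hlim
end

section
/- Let f : ℝ² → ℝ be integrable and supported in [0,1]², and define the right-angle broken-line transform (Tf)(x, y) = ∫₀ˣ f(t, y) dt + ∫₀ʸ f(x, t) dt. Then for every (x, y) ∈ [0,1]², the function F(x, y) := ∫₀ʸ (Tf)(x − y + t, t) dt equals the integral of f over the negative cone at (x, y) for the standard coordinate order, i.e. F(x, y) = ∫_{[0,x]×[0,y]} f dμ (which equals ∫_{{z : z ≤ (x,y) coordinatewise}} f dμ since f is supported in [0,1]²). Moreover, if f is in addition continuous, then f(x, y) = (∂/∂x)(∂/∂y) F(x, y). -/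
open MeasureTheory Filter Set
open scoped Topology

noncomputable def brokenT (f : ℝ × ℝ → ℝ) (x y : ℝ) : ℝ :=
  (∫ t in (0:ℝ)..x, f (t, y)) + ∫ t in (0:ℝ)..y, f (x, t)

noncomputable def brokenF (f : ℝ × ℝ → ℝ) (x y : ℝ) : ℝ :=
  ∫ t in (0:ℝ)..y, brokenT f (x - y + t) t

namespace Stmt7Aux

lemma null_v (c : ℝ) : (volume : Measure (ℝ × ℝ)) {p : ℝ × ℝ | p.1 = c} = 0 := by
  have h : {p : ℝ × ℝ | p.1 = c} = ({c} : Set ℝ) ×ˢ (univ : Set ℝ) := by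
    ext p
    simp only [Set.mem_prod, mem_singleton_iff, mem_univ, and_true, true_and, mem_setOf_eq]
  rw [h, Measure.volume_eq_prod, Measure.prod_prod]
  simp

lemma null_h (c : ℝ) : (volume : Measure (ℝ × ℝ)) {p : ℝ × ℝ | p.2 = c} = 0 := by
  have h : {p : ℝ × ℝ | p.2 = c} = (univ : Set ℝ) ×ˢ ({c} : Set ℝ) := by
    ext p
    simp only [Set.mem_prod, mem_singleton_iff, mem_univ, and_true, true_and, mem_setOf_eq]
  rw [h, Measure.volume_eq_prod, Measure.prod_prod]
  simp

lemma null_d (c : ℝ) : (volume : Measure (ℝ × ℝ)) {p : ℝ × ℝ | p.1 = p.2 + c} = 0 := by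
  have hm : MeasurableSet {p : ℝ × ℝ | p.1 = p.2 + c} :=
    (isClosed_eq continuous_fst (continuous_snd.add continuous_const)).measurableSet
  rw [Measure.volume_eq_prod, Measure.prod_apply hm]
  have hs : ∀ x : ℝ, (Prod.mk x ⁻¹' {p : ℝ × ℝ | p.1 = p.2 + c}) = {x - c} := by
    intro x; ext t
    simp only [mem_preimage, mem_setOf_eq, mem_singleton_iff]
    constructor <;> intro h <;> linarith
  simp [hs]

lemma int_zero_of_nonpos {g : ℝ → ℝ} {a : ℝ} (ha : a ≤ 0) (h : ∀ t, t < 0 → g t = 0) :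
    ∫ t in (0:ℝ)..a, g t = 0 := by
  rw [intervalIntegral.integral_of_ge ha]
  have h_ae : ∀ᵐ (t : ℝ), t ∈ Ioc a 0 → g t = 0 := by
    rw [ae_iff]
    refine measure_mono_null ?_ (measure_singleton (0:ℝ))
    intro t ht
    simp only [mem_setOf_eq, Classical.not_imp] at ht
    rcases lt_or_eq_of_le ht.1.2 with h2 | h2
    · exact absurd (h t h2) ht.2
    · simp [h2]
  have : ∫ t in Ioc a 0, g t = ∫ t in Ioc a 0, (0:ℝ) :=
    setIntegral_congr_ae measurableSet_Ioc h_ae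
  rw [this]; simp

section Main

variable {f : ℝ × ℝ → ℝ}

lemma supp1 (hsupp : ∀ p : ℝ × ℝ, p ∉ Set.Icc (0:ℝ) 1 ×ˢ Set.Icc (0:ℝ) 1 → f p = 0) :
    ∀ p : ℝ × ℝ, p.1 < 0 → f p = 0 := by
  intro p hp
  apply hsupp
  intro hmem
  exact absurd hmem.1.1 (not_le.2 hp)

lemma supp2 (hsupp : ∀ p : ℝ × ℝ, p ∉ Set.Icc (0:ℝ) 1 ×ˢ Set.Icc (0:ℝ) 1 → f p = 0) :
    ∀ p : ℝ × ℝ, p.2 < 0 → f p = 0 := by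
  intro p hp
  apply hsupp
  intro hmem
  exact absurd hmem.2.1 (not_le.2 hp)

lemma brokenF_eq_rect (hf : Integrable f)
    (hsupp : ∀ p : ℝ × ℝ, p ∉ Set.Icc (0:ℝ) 1 ×ˢ Set.Icc (0:ℝ) 1 → f p = 0) (x y : ℝ) :
    brokenF f x y = ∫ z in Set.Icc (0:ℝ) x ×ˢ Set.Icc (0:ℝ) y, f z := by
  have hs1 := supp1 hsupp
  have hs2 := supp2 hsupp
  rcases lt_or_ge y 0 with hy | hy
  · have hRe : Set.Icc (0:ℝ) x ×ˢ Set.Icc (0:ℝ) y = ∅ := by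
      rw [Set.Icc_eq_empty (not_le.2 hy), Set.prod_empty]
    rw [hRe]
    simp only [Measure.restrict_empty, integral_zero_measure]
    rw [brokenF]
    apply int_zero_of_nonpos hy.le
    intro t ht
    rw [brokenT]
    have h1 : (∫ s in (0:ℝ)..(x - y + t), f (s, t)) = 0 := by
      have hz : (fun s => f (s, t)) = fun _ => (0:ℝ) := funext fun s => hs2 (s, t) ht
      rw [hz, intervalIntegral.integral_const]
      simp
    have h2 : (∫ s in (0:ℝ)..t, f (x - y + t, s)) = 0 :=
      int_zero_of_nonpos ht.le (fun s hs => hs2 (x - y + t, s) hs)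
    rw [h1, h2, add_zero]
  · -- main case : 0 ≤ y
    set S₁ : Set (ℝ × ℝ) := {p | (0 < p.1 ∧ p.1 ≤ x - y + p.2) ∧ (0 < p.2 ∧ p.2 ≤ y)} with hS₁
    set S₂ : Set (ℝ × ℝ) :=
      {p | (0 < p.1 - (x - y) ∧ p.1 - (x - y) ≤ y) ∧ (0 < p.2 ∧ p.2 ≤ p.1 - (x - y))} with hS₂
    set T : Set (ℝ × ℝ) := {p | (0 < p.1 ∧ p.1 ≤ y) ∧ (0 < p.2 ∧ p.2 ≤ p.1)} with hT
    have hS₁m : MeasurableSet S₁ := by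
      rw [hS₁]
      simp only [Set.setOf_and]
      exact (((measurableSet_lt measurable_const measurable_fst).inter
        (measurableSet_le measurable_fst ((measurable_const.add measurable_snd)))).inter
        ((measurableSet_lt measurable_const measurable_snd).inter
         (measurableSet_le measurable_snd measurable_const)))
    have hS₂m : MeasurableSet S₂ := by
      rw [hS₂]
      simp only [Set.setOf_and]
      exact (((measurableSet_lt measurable_const (measurable_fst.sub measurable_const)).inter
        (measurableSet_le (measurable_fst.sub measurable_const) measurable_const)).inter
        ((measurableSet_lt measurable_const measurable_snd).inter
         (measurableSet_le measurable_snd (measurable_fst.sub measurable_const))))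
    have hTm : MeasurableSet T := by
      rw [hT]
      simp only [Set.setOf_and]
      exact (((measurableSet_lt measurable_const measurable_fst).inter
        (measurableSet_le measurable_fst measurable_const)).inter
        ((measurableSet_lt measurable_const measurable_snd).inter
         (measurableSet_le measurable_snd measurable_fst)))
    have hRm : MeasurableSet (Set.Icc (0:ℝ) x ×ˢ Set.Icc (0:ℝ) y) :=
      measurableSet_Icc.prod measurableSet_Icc
    set g₁ : ℝ × ℝ → ℝ := S₁.indicator f with hg₁
    set k : ℝ × ℝ → ℝ := T.indicator (fun p => f ((x - y, 0) + p)) with hk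
    have hfc : Integrable (fun p : ℝ × ℝ => f ((x - y, 0) + p)) volume :=
      hf.comp_add_left ((x - y, 0))
    have hg₁i : Integrable g₁ volume := hf.indicator hS₁m
    have hki : Integrable k volume := hfc.indicator hTm
    have hg₁i' : Integrable g₁ (volume.prod volume) := by
      rw [← Measure.volume_eq_prod]; exact hg₁i
    have hki' : Integrable k (volume.prod volume) := by
      rw [← Measure.volume_eq_prod]; exact hki
    -- pointwise identity
    have hP : ∀ t : ℝ, (Ioc (0:ℝ) y).indicator (fun t => brokenT f (x - y + t) t) t
        = (∫ s, g₁ (s, t)) + (∫ s, k (t, s)) := by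
      intro t
      by_cases ht : t ∈ Ioc (0:ℝ) y
      · rw [Set.indicator_of_mem ht]
        show brokenT f (x - y + t) t = _
        rw [brokenT]
        congr 1
        · have hrw : (fun s => g₁ (s, t))
              = (Ioc (0:ℝ) (x - y + t)).indicator (fun s => f (s, t)) := by
            funext s
            rw [hg₁]
            by_cases hs : s ∈ Ioc (0:ℝ) (x - y + t)
            · rw [Set.indicator_of_mem hs, Set.indicator_of_mem]
              exact ⟨⟨hs.1, hs.2⟩, ht.1, ht.2⟩
            · rw [Set.indicator_of_notMem hs, Set.indicator_of_notMem]
              intro hmem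
              exact hs ⟨hmem.1.1, hmem.1.2⟩
          rw [hrw, integral_indicator measurableSet_Ioc]
          rcases le_or_gt 0 (x - y + t) with hp | hn
          · rw [intervalIntegral.integral_of_le hp]
          · rw [Set.Ioc_eq_empty (by simpa using hn.le), Measure.restrict_empty,
              integral_zero_measure]
            exact int_zero_of_nonpos hn.le (fun s hs => hs1 (s, t) hs)
        · have hrw : (fun s => k (t, s))
              = (Ioc (0:ℝ) t).indicator (fun s => f (x - y + t, s)) := by
            funext s
            rw [hk]
            by_cases hs : s ∈ Ioc (0:ℝ) t
            · rw [Set.indicator_of_mem hs, Set.indicator_of_mem]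
              · show f ((x - y, 0) + (t, s)) = f (x - y + t, s)
                norm_num [Prod.mk_add_mk]
              · exact ⟨⟨ht.1, ht.2⟩, hs.1, hs.2⟩
            · rw [Set.indicator_of_notMem hs, Set.indicator_of_notMem]
              intro hmem
              exact hs ⟨hmem.2.1, hmem.2.2⟩
          rw [hrw, integral_indicator measurableSet_Ioc,
            intervalIntegral.integral_of_le ht.1.le]
      · rw [Set.indicator_of_notMem ht]
        have hz1 : ∀ s : ℝ, g₁ (s, t) = 0 := by
          intro s; rw [hg₁]
          apply Set.indicator_of_notMem
          intro hmem
          exact ht ⟨hmem.2.1, hmem.2.2⟩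
        have hz2 : ∀ s : ℝ, k (t, s) = 0 := by
          intro s; rw [hk]
          apply Set.indicator_of_notMem
          intro hmem
          exact ht ⟨hmem.1.1, hmem.1.2⟩
        simp [hz1, hz2]
    -- Fubini pieces
    have e3 : (∫ t, ∫ s, g₁ (s, t)) = ∫ z in S₁, f z := by
      have h1 := MeasureTheory.integral_integral_symm (μ := volume) (ν := volume)
        (f := fun t s => g₁ (s, t)) hg₁i'.swap
      simp only [Prod.mk.eta] at h1
      rw [h1, ← Measure.volume_eq_prod]
      exact integral_indicator hS₁m
    have e4 : (∫ t, ∫ s, k (t, s)) = ∫ z in S₂, f z := by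
      have h1 := MeasureTheory.integral_integral (μ := volume) (ν := volume)
        (f := fun t s => k (t, s)) hki'
      simp only [Prod.mk.eta] at h1
      rw [h1]
      have h2 : ∀ z : ℝ × ℝ, k z = S₂.indicator f ((x - y, 0) + z) := by
        intro z
        rw [hk]
        by_cases hz : z ∈ T
        · rw [Set.indicator_of_mem hz, Set.indicator_of_mem]
          obtain ⟨⟨a1, a2⟩, a3, a4⟩ := hz
          constructor
          · constructor
            · show (0:ℝ) < ((x - y, 0) + z).1 - (x - y)
              simp only [Prod.fst_add]
              linarith
            · show ((x - y, 0) + z).1 - (x - y) ≤ y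
              simp only [Prod.fst_add]
              linarith
          · constructor
            · show (0:ℝ) < ((x - y, 0) + z).2
              simp only [Prod.snd_add]
              linarith
            · show ((x - y, 0) + z).2 ≤ ((x - y, 0) + z).1 - (x - y)
              simp only [Prod.snd_add, Prod.fst_add]
              linarith
        · rw [Set.indicator_of_notMem hz, Set.indicator_of_notMem]
          intro hmem
          apply hz
          obtain ⟨⟨a1, a2⟩, a3, a4⟩ := hmem
          simp only [Prod.fst_add, Prod.snd_add] at a1 a2 a3 a4
          exact ⟨⟨by linarith, by linarith⟩, by linarith, by linarith⟩
      rw [show (∫ z, k z ∂(volume.prod volume)) = ∫ z, S₂.indicator f ((x - y, 0) + z)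
          ∂(volume.prod volume) from integral_congr_ae (Eventually.of_forall h2),
        ← Measure.volume_eq_prod,
        integral_add_left_eq_self (S₂.indicator f) ((x - y, 0) : ℝ × ℝ)]
      exact integral_indicator hS₂m
    -- combine regions
    have e5 : (∫ z in S₁, f z) + (∫ z in S₂, f z)
        = ∫ z in Set.Icc (0:ℝ) x ×ˢ Set.Icc (0:ℝ) y, f z := by
      rw [← integral_indicator hS₁m, ← integral_indicator hS₂m, ← integral_indicator hRm,
        ← integral_add (hf.indicator hS₁m) (hf.indicator hS₂m)]
      apply integral_congr_ae
      have hnull : (volume : Measure (ℝ × ℝ)) ({p : ℝ × ℝ | p.1 = 0} ∪ ({p | p.1 = x}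
          ∪ ({p | p.2 = 0} ∪ ({p | p.2 = y} ∪ {p | p.1 = p.2 + (x - y)})))) = 0 := by
        refine measure_union_null (null_v 0) (measure_union_null (null_v x)
          (measure_union_null (null_h 0) (measure_union_null (null_h y) (null_d (x - y)))))
      rw [Filter.EventuallyEq, ae_iff]
      refine measure_mono_null ?_ hnull
      intro p hp
      simp only [mem_setOf_eq] at hp
      simp only [mem_union, mem_setOf_eq]
      by_contra hN
      push_neg at hN
      obtain ⟨h1, h2, h3, h4, h5⟩ := hN
      apply hp
      by_cases m1 : p ∈ S₁
      · have hm1 : (0 < p.1 ∧ p.1 ≤ x - y + p.2) ∧ (0 < p.2 ∧ p.2 ≤ y) := m1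
        have m2 : p ∉ S₂ := by
          intro m2
          have hm2 : (0 < p.1 - (x - y) ∧ p.1 - (x - y) ≤ y)
              ∧ (0 < p.2 ∧ p.2 ≤ p.1 - (x - y)) := m2
          exact h5 (by linarith [hm1.1.2, hm2.2.2])
        have mR : p ∈ Set.Icc (0:ℝ) x ×ˢ Set.Icc (0:ℝ) y := by
          simp only [Set.mem_prod, Set.mem_Icc]
          exact ⟨⟨hm1.1.1.le, by linarith [hm1.1.2, hm1.2.2]⟩, hm1.2.1.le, hm1.2.2⟩
        rw [Set.indicator_of_mem m1, Set.indicator_of_notMem m2,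
          Set.indicator_of_mem mR, add_zero]
      · by_cases m2 : p ∈ S₂
        · have hm2 : (0 < p.1 - (x - y) ∧ p.1 - (x - y) ≤ y)
              ∧ (0 < p.2 ∧ p.2 ≤ p.1 - (x - y)) := m2
          rcases lt_or_ge p.1 0 with hneg | hpos
          · have hf0 : f p = 0 := hs1 p hneg
            have mR : p ∉ Set.Icc (0:ℝ) x ×ˢ Set.Icc (0:ℝ) y := by
              simp only [Set.mem_prod, Set.mem_Icc]
              intro hcon
              linarith [hcon.1.1]
            rw [Set.indicator_of_notMem m1, Set.indicator_of_mem m2,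
              Set.indicator_of_notMem mR, hf0, zero_add]
          · have mR : p ∈ Set.Icc (0:ℝ) x ×ˢ Set.Icc (0:ℝ) y := by
              simp only [Set.mem_prod, Set.mem_Icc]
              exact ⟨⟨hpos, by linarith [hm2.1.2]⟩, hm2.2.1.le,
                by linarith [hm2.2.2, hm2.1.2]⟩
            rw [Set.indicator_of_notMem m1, Set.indicator_of_mem m2,
              Set.indicator_of_mem mR, zero_add]
        · have mR : p ∉ Set.Icc (0:ℝ) x ×ˢ Set.Icc (0:ℝ) y := by
            intro hmem
            simp only [Set.mem_prod, Set.mem_Icc] at hmem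
            obtain ⟨⟨b1, b2⟩, b3, b4⟩ := hmem
            have hb1 : 0 < p.1 := lt_of_le_of_ne b1 (Ne.symm h1)
            have hb3 : 0 < p.2 := lt_of_le_of_ne b3 (Ne.symm h3)
            rcases lt_or_ge p.1 (x - y + p.2) with hlt | hge
            · exact m1 ⟨⟨hb1, hlt.le⟩, hb3, b4⟩
            · have hgt : x - y + p.2 < p.1 :=
                lt_of_le_of_ne hge (fun hcon => h5 (by linarith))
              exact m2 ⟨⟨by linarith, by linarith⟩, hb3, by linarith⟩
          rw [Set.indicator_of_notMem m1, Set.indicator_of_notMem m2,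
            Set.indicator_of_notMem mR, add_zero]
    -- assemble
    have hI₁ : Integrable (fun t => ∫ s, g₁ (s, t)) volume :=
      hg₁i'.integral_prod_right
    have hI₂ : Integrable (fun t => ∫ s, k (t, s)) volume :=
      hki'.integral_prod_left
    rw [brokenF, intervalIntegral.integral_of_le hy,
      ← integral_indicator measurableSet_Ioc]
    calc (∫ t, (Ioc (0:ℝ) y).indicator (fun t => brokenT f (x - y + t) t) t)
        = ∫ t, ((∫ s, g₁ (s, t)) + (∫ s, k (t, s))) :=
          integral_congr_ae (Eventually.of_forall hP)
      _ = (∫ t, ∫ s, g₁ (s, t)) + (∫ t, ∫ s, k (t, s)) := integral_add hI₁ hI₂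
      _ = (∫ z in S₁, f z) + (∫ z in S₂, f z) := by rw [e3, e4]
      _ = ∫ z in Set.Icc (0:ℝ) x ×ˢ Set.Icc (0:ℝ) y, f z := e5

lemma rect_eq_iterated (hf : Integrable f)
    (hsupp : ∀ p : ℝ × ℝ, p ∉ Set.Icc (0:ℝ) 1 ×ˢ Set.Icc (0:ℝ) 1 → f p = 0) (a b : ℝ) :
    (∫ z in Set.Icc (0:ℝ) a ×ˢ Set.Icc (0:ℝ) b, f z)
      = ∫ t in (0:ℝ)..b, (∫ s in (0:ℝ)..a, f (s, t)) := by
  have hs1 := supp1 hsupp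
  have hs2 := supp2 hsupp
  rcases lt_or_ge b 0 with hb | hb
  · have hL : Set.Icc (0:ℝ) a ×ˢ Set.Icc (0:ℝ) b = ∅ := by
      rw [Set.Icc_eq_empty (not_le.2 hb), Set.prod_empty]
    rw [hL]
    simp only [Measure.restrict_empty, integral_zero_measure]
    symm
    apply int_zero_of_nonpos hb.le
    intro t ht
    have hz : (fun s => f (s, t)) = fun _ => (0:ℝ) := funext fun s => hs2 (s, t) ht
    rw [hz, intervalIntegral.integral_const]
    simp
  rcases lt_or_ge a 0 with ha | ha
  · have hL : Set.Icc (0:ℝ) a ×ˢ Set.Icc (0:ℝ) b = ∅ := by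
      rw [Set.Icc_eq_empty (not_le.2 ha), Set.empty_prod]
    rw [hL]
    simp only [Measure.restrict_empty, integral_zero_measure]
    have hz : (fun t => ∫ s in (0:ℝ)..a, f (s, t)) = fun _ => (0:ℝ) :=
      funext fun t => int_zero_of_nonpos ha.le (fun s hs => hs1 (s, t) hs)
    rw [hz, intervalIntegral.integral_const]
    simp
  · -- a, b ≥ 0
    have hmIoc : MeasurableSet (Ioc (0:ℝ) a ×ˢ Ioc (0:ℝ) b) :=
      measurableSet_Ioc.prod measurableSet_Ioc
    have hmIcc : MeasurableSet (Set.Icc (0:ℝ) a ×ˢ Set.Icc (0:ℝ) b) :=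
      measurableSet_Icc.prod measurableSet_Icc
    have hAe : (∫ z in Set.Icc (0:ℝ) a ×ˢ Set.Icc (0:ℝ) b, f z)
        = ∫ z in Ioc (0:ℝ) a ×ˢ Ioc (0:ℝ) b, f z := by
      rw [← integral_indicator hmIcc, ← integral_indicator hmIoc]
      apply integral_congr_ae
      rw [Filter.EventuallyEq, ae_iff]
      refine measure_mono_null ?_
        (measure_union_null (null_v 0) (null_h 0))
      intro p hp
      simp only [mem_setOf_eq] at hp
      simp only [mem_union, mem_setOf_eq]
      by_contra hN
      push_neg at hN
      obtain ⟨h1, h2⟩ := hN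
      apply hp
      by_cases m1 : p ∈ Ioc (0:ℝ) a ×ˢ Ioc (0:ℝ) b
      · have : p ∈ Set.Icc (0:ℝ) a ×ˢ Set.Icc (0:ℝ) b :=
          ⟨⟨m1.1.1.le, m1.1.2⟩, m1.2.1.le, m1.2.2⟩
        rw [Set.indicator_of_mem this, Set.indicator_of_mem m1]
      · by_cases m2 : p ∈ Set.Icc (0:ℝ) a ×ˢ Set.Icc (0:ℝ) b
        · exfalso
          apply m1
          exact ⟨⟨lt_of_le_of_ne m2.1.1 (Ne.symm h1), m2.1.2⟩,
            lt_of_le_of_ne m2.2.1 (Ne.symm h2), m2.2.2⟩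
        · rw [Set.indicator_of_notMem m2, Set.indicator_of_notMem m1]
    set G : ℝ × ℝ → ℝ := (Ioc (0:ℝ) a ×ˢ Ioc (0:ℝ) b).indicator f with hG
    have hGi : Integrable G volume := hf.indicator hmIoc
    have hGi' : Integrable G (volume.prod volume) := by
      rw [← Measure.volume_eq_prod]; exact hGi
    have hP : ∀ t : ℝ, (Ioc (0:ℝ) b).indicator (fun t => ∫ s in (0:ℝ)..a, f (s, t)) t
        = ∫ s, G (s, t) := by
      intro t
      by_cases ht : t ∈ Ioc (0:ℝ) b
      · rw [Set.indicator_of_mem ht]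
        have hrw : (fun s => G (s, t)) = (Ioc (0:ℝ) a).indicator (fun s => f (s, t)) := by
          funext s
          rw [hG]
          by_cases hs : s ∈ Ioc (0:ℝ) a
          · rw [Set.indicator_of_mem hs, Set.indicator_of_mem]
            exact ⟨hs, ht⟩
          · rw [Set.indicator_of_notMem hs, Set.indicator_of_notMem]
            intro hmem
            exact hs hmem.1
        rw [hrw, integral_indicator measurableSet_Ioc,
          intervalIntegral.integral_of_le ha]
      · rw [Set.indicator_of_notMem ht]
        have hz : ∀ s : ℝ, G (s, t) = 0 := by
          intro s
          rw [hG]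
          apply Set.indicator_of_notMem
          intro hmem
          exact ht hmem.2
        symm
        simp [hz]
    rw [hAe, intervalIntegral.integral_of_le hb, ← integral_indicator measurableSet_Ioc]
    have e3 : (∫ t, ∫ s, G (s, t)) = ∫ z in Ioc (0:ℝ) a ×ˢ Ioc (0:ℝ) b, f z := by
      have h1 := MeasureTheory.integral_integral_symm (μ := volume) (ν := volume)
        (f := fun t s => G (s, t)) hGi'.swap
      simp only [Prod.mk.eta] at h1
      rw [h1, ← Measure.volume_eq_prod]
      exact integral_indicator hmIoc
    rw [← e3]
    exact (integral_congr_ae (Eventually.of_forall hP)).symm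

end Main

end Stmt7Aux

open Stmt7Aux in
/-- For `f` integrable and supported in `[0,1]²`, `F(x,y) = ∫₀ʸ (Tf)(x-y+t,t) dt` equals the
integral of `f` over `[0,x] × [0,y]`, which is the integral of `f` over the negative cone
`{z : z ≤ (x,y)}` for the coordinatewise order; and if `f` is moreover continuous then
`f(x,y) = (∂/∂x)(∂/∂y) F(x,y)`. -/
theorem stmt7 (f : ℝ × ℝ → ℝ) (hf : Integrable f)
    (hsupp : ∀ p : ℝ × ℝ, p ∉ Set.Icc (0:ℝ) 1 ×ˢ Set.Icc (0:ℝ) 1 → f p = 0) :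
    ∀ x ∈ Set.Icc (0:ℝ) 1, ∀ y ∈ Set.Icc (0:ℝ) 1,
      (brokenF f x y = ∫ z in Set.Icc (0:ℝ) x ×ˢ Set.Icc (0:ℝ) y, f z) ∧
      (brokenF f x y = ∫ z in {z : ℝ × ℝ | z ≤ (x, y)}, f z) ∧
      (Continuous f →
        f (x, y) = deriv (fun a => deriv (fun b => brokenF f a b) y) x) := by
  intro x hx y hy
  have hs1 := supp1 hsupp
  have hs2 := supp2 hsupp
  refine ⟨brokenF_eq_rect hf hsupp x y, ?_, ?_⟩
  · rw [brokenF_eq_rect hf hsupp x y]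
    have hcone : {z : ℝ × ℝ | z ≤ (x, y)} = Iic x ×ˢ Iic y := by
      ext z
      simp [Prod.le_def, Set.mem_prod]
    rw [hcone, ← integral_indicator (measurableSet_Icc.prod measurableSet_Icc),
      ← integral_indicator (measurableSet_Iic.prod measurableSet_Iic)]
    apply integral_congr_ae
    rw [Filter.EventuallyEq, ae_iff]
    refine measure_mono_null ?_ (measure_union_null (null_v 0) (null_h 0))
    intro p hp
    simp only [mem_setOf_eq] at hp
    simp only [mem_union, mem_setOf_eq]
    by_contra hN
    push_neg at hN
    obtain ⟨h1, h2⟩ := hN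
    apply hp
    by_cases hR : p ∈ Set.Icc (0:ℝ) x ×ˢ Set.Icc (0:ℝ) y
    · rw [Set.indicator_of_mem hR, Set.indicator_of_mem]
      exact ⟨hR.1.2, hR.2.2⟩
    · rw [Set.indicator_of_notMem hR]
      by_cases hI : p ∈ Iic x ×ˢ Iic y
      · rw [Set.indicator_of_mem hI]
        symm
        have hneg : p.1 < 0 ∨ p.2 < 0 := by
          by_contra hc
          push_neg at hc
          exact hR ⟨⟨hc.1, hI.1⟩, hc.2, hI.2⟩
        rcases hneg with hneg | hneg
        · exact hs1 p hneg
        · exact hs2 p hneg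
      · rw [Set.indicator_of_notMem hI]
  · intro hcont
    have key2 : ∀ a b : ℝ, brokenF f a b
        = ∫ t in (0:ℝ)..b, (fun t => ∫ s in (0:ℝ)..a, f (s, t)) t :=
      fun a b => (brokenF_eq_rect hf hsupp a b).trans (rect_eq_iterated hf hsupp a b)
    have hinner : ∀ a : ℝ, deriv (fun b => brokenF f a b) y = ∫ s in (0:ℝ)..a, f (s, y) := by
      intro a
      have hfun : (fun b => brokenF f a b)
          = fun b => ∫ t in (0:ℝ)..b, (fun t => ∫ s in (0:ℝ)..a, f (s, t)) t :=
        funext (key2 a)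
      rw [hfun]
      have hcontinner : Continuous fun t => ∫ s in (0:ℝ)..a, f (s, t) :=
        intervalIntegral.continuous_parametric_intervalIntegral_of_continuous'
          (f := fun t s => f (s, t)) (hcont.comp continuous_swap) 0 a
      exact Continuous.deriv_integral _ hcontinner 0 y
    have houter : (fun a => deriv (fun b => brokenF f a b) y)
        = fun a => ∫ s in (0:ℝ)..a, f (s, y) := funext hinner
    rw [houter,
      Continuous.deriv_integral (fun s => f (s, y))
        (by exact hcont.comp (continuous_id.prodMk continuous_const)) 0 x]
end

section
/- (Inversion formula for the upward V-line transform, integrated form.) Let β ∈ (0, π/2), and let u = (sin β, cos β), v = (−sin β, cos β), so that the broken rays open upward with axis direction α = (0,1) and half-opening angle β. Let f : ℝ² → ℝ be smooth with compact support, and let g(x, y) = ∫₀^∞ f((x,y) + tu) dt + ∫₀^∞ f((x,y) + tv) dt be its V-line (broken-ray) transform. Then for every (x, y) ∈ ℝ², f(x, y) = (sin β / 2) · ∫_y^{∞} [ cot β · (∂²g/∂y²)(x, t) − tan β · (∂²g/∂x²)(x, t) ] dt. -/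
open MeasureTheory Filter Set
open scoped Topology

/-- The upward V-line (broken-ray) transform with vertex `(x, y)`, vertical axis and
half-opening angle `β`: the integral of `f` along the two upward rays in the unit
directions `(sin β, cos β)` and `(−sin β, cos β)`. -/
noncomputable def vLineT (β : ℝ) (f : ℝ × ℝ → ℝ) (x y : ℝ) : ℝ :=
  (∫ t in Set.Ioi (0:ℝ), f (x + t * Real.sin β, y + t * Real.cos β)) +
    ∫ t in Set.Ioi (0:ℝ), f (x - t * Real.sin β, y + t * Real.cos β)

namespace Stmt14Aux

open Metric

variable {f : ℝ × ℝ → ℝ}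

lemma vanish_of_abs_snd {R : ℝ} (hR : tsupport f ⊆ Metric.closedBall 0 R)
    {q : ℝ × ℝ} (hq : R < |q.2|) : f q = 0 := by
  apply image_eq_zero_of_notMem_tsupport
  intro hmem
  have h1 := hR hmem
  rw [Metric.mem_closedBall, dist_zero_right] at h1
  have h2 : |q.2| ≤ ‖q‖ := by simpa using norm_snd_le q
  linarith

lemma comp_ray_hcs (hcs : HasCompactSupport f) (p : ℝ × ℝ) (a c : ℝ) (hc : 0 < c) :
    HasCompactSupport (fun t : ℝ => f (p + t • (a, c))) := by
  obtain ⟨R, hR⟩ := hcs.isBounded.subset_closedBall 0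
  apply HasCompactSupport.intro (isCompact_Icc (a := (-R - p.2) / c) (b := (R - p.2) / c))
  intro t ht
  apply vanish_of_abs_snd hR
  have h2 : (p + t • ((a, c) : ℝ × ℝ)).2 = p.2 + t * c := by
    simp [Prod.smul_snd]
  rw [h2, lt_abs]
  simp only [mem_Icc, not_and_or, not_le] at ht
  rcases ht with ht | ht
  · right
    have := (lt_div_iff₀ hc).1 ht
    linarith
  · left
    have := (div_lt_iff₀ hc).1 ht
    linarith

lemma comp_vert_hcs (hcs : HasCompactSupport f) (x : ℝ) :
    HasCompactSupport (fun t : ℝ => f (x, t)) := by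
  obtain ⟨R, hR⟩ := hcs.isBounded.subset_closedBall 0
  apply HasCompactSupport.intro (isCompact_Icc (a := -R) (b := R))
  intro t ht
  apply vanish_of_abs_snd hR
  simp only [mem_Icc, not_and_or, not_le] at ht
  rw [lt_abs]
  rcases ht with ht | ht
  · right; linarith
  · left; exact ht

lemma hcs_tendsto {g : ℝ → ℝ} (h : HasCompactSupport g) : Tendsto g atTop (𝓝 0) := by
  rw [hasCompactSupport_iff_eventuallyEq, Filter.coclosedCompact_eq_cocompact] at h
  exact h.filter_mono _root_.atTop_le_cocompact |>.tendsto

lemma pd_contDiff (hf : ContDiff ℝ (⊤ : ℕ∞) f) (v : ℝ × ℝ) :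
    ContDiff ℝ (⊤ : ℕ∞) (fun p => fderiv ℝ f p v) :=
  (hf.fderiv_right (by simp)).clm_apply contDiff_const

lemma pd_hcs (hcs : HasCompactSupport f) (v : ℝ × ℝ) :
    HasCompactSupport (fun p => fderiv ℝ f p v) :=
  hcs.fderiv_apply ℝ v

lemma ray_ftc (hf : ContDiff ℝ (⊤ : ℕ∞) f) (hcs : HasCompactSupport f)
    (a c : ℝ) (hc : 0 < c) (p : ℝ × ℝ) :
    ∫ t in Ioi (0:ℝ), fderiv ℝ f (p + t • (a, c)) (a, c) = -f p := by
  have hpath : ∀ t : ℝ, HasDerivAt (fun t : ℝ => p + t • (a, c)) (a, c) t := by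
    intro t
    simpa using ((hasDerivAt_id t).smul_const ((a, c) : ℝ × ℝ)).const_add p
  have hψ : ∀ t : ℝ, HasDerivAt (fun t : ℝ => f (p + t • (a, c)))
      (fderiv ℝ f (p + t • (a, c)) (a, c)) t := fun t =>
    ((hf.differentiable (by simp) _).hasFDerivAt).comp_hasDerivAt t (hpath t)
  have hcs' : HasCompactSupport (fun t : ℝ => f (p + t • (a, c))) := comp_ray_hcs hcs p a c hc
  have hcs'' : HasCompactSupport (fun t : ℝ => fderiv ℝ f (p + t • (a, c)) (a, c)) :=
    comp_ray_hcs (pd_hcs hcs (a, c)) p a c hc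
  have hcont'' : Continuous (fun t : ℝ => fderiv ℝ f (p + t • (a, c)) (a, c)) := by
    apply ((pd_contDiff hf (a, c)).continuous).comp
    fun_prop
  have h0 : Tendsto (fun t : ℝ => f (p + t • (a, c))) atTop (𝓝 0) := hcs_tendsto hcs'
  have := integral_Ioi_of_hasDerivAt_of_tendsto' (a := 0) (fun t _ => hψ t)
    (hcont''.integrable_of_hasCompactSupport hcs'').integrableOn h0
  simpa using this

lemma hasDerivAt_param (hf : ContDiff ℝ (⊤ : ℕ∞) f) (hcs : HasCompactSupport f)
    (a c : ℝ) (hc : 0 < c) (p₀ e : ℝ × ℝ) (w₀ : ℝ) :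
    HasDerivAt (fun w : ℝ => ∫ t in Ioi (0:ℝ), f (p₀ + w • e + t • (a, c)))
      (∫ t in Ioi (0:ℝ), fderiv ℝ f (p₀ + w₀ • e + t • (a, c)) e) w₀ := by
  obtain ⟨R, hR⟩ := hcs.isBounded.subset_closedBall 0
  obtain ⟨C, hC⟩ := (hcs.fderiv ℝ).exists_bound_of_continuous (hf.continuous_fderiv (by simp))
  set T : ℝ := (R + |p₀.2| + ‖e‖ * (|w₀| + 1)) / c with hT
  have hfd : Differentiable ℝ f := hf.differentiable (by simp)
  have hcont : ∀ w : ℝ, Continuous (fun t : ℝ => f (p₀ + w • e + t • (a, c))) := by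
    intro w; apply hf.continuous.comp; fun_prop
  have hcont' : Continuous (fun t : ℝ => fderiv ℝ f (p₀ + w₀ • e + t • (a, c)) e) := by
    apply ((pd_contDiff hf e).continuous).comp; fun_prop
  have key := hasDerivAt_integral_of_dominated_loc_of_deriv_le
      (μ := volume.restrict (Ioi (0:ℝ)))
      (F := fun (w : ℝ) (t : ℝ) => f (p₀ + w • e + t • (a, c)))
      (F' := fun (w : ℝ) (t : ℝ) => fderiv ℝ f (p₀ + w • e + t • (a, c)) e)
      (x₀ := w₀) (bound := (Icc (-T) T).indicator fun _ => C * ‖e‖)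
      (Metric.ball_mem_nhds w₀ one_pos)
      (Eventually.of_forall fun w => ((hcont w).aestronglyMeasurable))
      (((hcont w₀).integrable_of_hasCompactSupport
        (comp_ray_hcs hcs (p₀ + w₀ • e) a c hc)).restrict)
      (hcont'.aestronglyMeasurable)
      ?_ ?_ ?_
  · exact key.2
  · -- bound
    apply ae_of_all
    intro t w hw
    by_cases ht : t ∈ Icc (-T) T
    · rw [indicator_of_mem ht]
      calc ‖fderiv ℝ f (p₀ + w • e + t • (a, c)) e‖
          ≤ ‖fderiv ℝ f (p₀ + w • e + t • (a, c))‖ * ‖e‖ :=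
            ContinuousLinearMap.le_opNorm _ _
        _ ≤ C * ‖e‖ := mul_le_mul_of_nonneg_right (hC _) (norm_nonneg _)
    · rw [indicator_of_notMem ht]
      have hz : fderiv ℝ f (p₀ + w • e + t • (a, c)) = 0 := by
        apply fderiv_of_notMem_tsupport
        intro hmem
        have h1 := hR hmem
        rw [Metric.mem_closedBall, dist_zero_right] at h1
        have h2 : |(p₀ + w • e + t • ((a, c) : ℝ × ℝ)).2| ≤
            ‖(p₀ + w • e + t • ((a, c) : ℝ × ℝ))‖ := by
          simpa using norm_snd_le (p₀ + w • e + t • ((a, c) : ℝ × ℝ))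
        have h3 : (p₀ + w • e + t • ((a, c) : ℝ × ℝ)).2 = p₀.2 + w * e.2 + t * c := by simp
        rw [h3] at h2
        have hw1 : |w| ≤ |w₀| + 1 := by
          have hb := mem_ball_iff_norm.1 hw
          rw [Real.norm_eq_abs] at hb
          linarith [abs_sub_abs_le_abs_sub w w₀]
        have he2 : |e.2| ≤ ‖e‖ := by simpa using norm_snd_le e
        have hwe : |w * e.2| ≤ (|w₀| + 1) * ‖e‖ := by
          rw [abs_mul]
          apply mul_le_mul hw1 he2 (abs_nonneg _) (by positivity)
        have htT : T < |t| := by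
          simp only [mem_Icc, not_and_or, not_le] at ht
          rw [lt_abs]
          rcases ht with ht | ht
          · right; linarith
          · left; exact ht
        have htc : T * c < |t * c| := by
          rw [abs_mul, abs_of_pos hc]
          exact mul_lt_mul_of_pos_right htT hc
        rw [hT, div_mul_cancel₀ _ (ne_of_gt hc)] at htc
        have h4 : |t * c| ≤ |p₀.2 + w * e.2 + t * c| + |p₀.2 + w * e.2| := by
          calc |t * c| = |(p₀.2 + w * e.2 + t * c) - (p₀.2 + w * e.2)| := by
                rw [show (p₀.2 + w * e.2 + t * c) - (p₀.2 + w * e.2) = t * c by ring]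
            _ ≤ |p₀.2 + w * e.2 + t * c| + |p₀.2 + w * e.2| := abs_sub _ _
        have h5 : |p₀.2 + w * e.2| ≤ |p₀.2| + |w * e.2| := abs_add_le _ _
        have hmul : ‖e‖ * (|w₀| + 1) = (|w₀| + 1) * ‖e‖ := by ring
        linarith
      rw [hz]
      simp
  · -- bound integrable
    apply Integrable.restrict
    rw [integrable_indicator_iff measurableSet_Icc]
    exact integrableOn_const measure_Icc_lt_top.ne
  · -- differentiability
    apply ae_of_all
    intro t w hw
    have hpath : HasDerivAt (fun w : ℝ => p₀ + w • e + t • ((a, c) : ℝ × ℝ)) e w := by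
      simpa using ((((hasDerivAt_id w).smul_const e).const_add p₀).add_const
        (t • ((a, c) : ℝ × ℝ)))
    exact ((hfd _).hasFDerivAt).comp_hasDerivAt w hpath

lemma snd_deriv_expand (hf : ContDiff ℝ (⊤ : ℕ∞) f) (q : ℝ × ℝ) (a c : ℝ) :
    fderiv ℝ (fun p => fderiv ℝ f p (-a, c)) q (a, c)
      = c ^ 2 * fderiv ℝ (fun p => fderiv ℝ f p ((0:ℝ), (1:ℝ))) q (0, 1)
        - a ^ 2 * fderiv ℝ (fun p => fderiv ℝ f p ((1:ℝ), (0:ℝ))) q (1, 0) := by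
  have hd : Differentiable ℝ (fderiv ℝ f) := (hf.fderiv_right (m := 1) (by exact WithTop.coe_le_coe.2 le_top)).differentiable (by simp)
  have key : ∀ v u : ℝ × ℝ, fderiv ℝ (fun p => fderiv ℝ f p v) q u
      = fderiv ℝ (fderiv ℝ f) q u v := by
    intro v u
    have h : HasFDerivAt (fun p => fderiv ℝ f p v)
        (((ContinuousLinearMap.apply ℝ ℝ v)).comp (fderiv ℝ (fderiv ℝ f) q)) q :=
      ((ContinuousLinearMap.apply ℝ ℝ v).hasFDerivAt).comp q (hd q).hasFDerivAt
    rw [h.fderiv]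
    rfl
  have hsym : ∀ v u : ℝ × ℝ, fderiv ℝ (fderiv ℝ f) q v u = fderiv ℝ (fderiv ℝ f) q u v :=
    second_derivative_symmetric (fun y => (hf.differentiable (by simp) y).hasFDerivAt)
      (hd q).hasFDerivAt
  simp only [key]
  set B := fderiv ℝ (fderiv ℝ f) q
  have h1 : ((a, c) : ℝ × ℝ) = a • ((1:ℝ), (0:ℝ)) + c • ((0:ℝ), (1:ℝ)) := by
    simp [Prod.smul_mk]
  have h2 : ((-a, c) : ℝ × ℝ) = (-a) • ((1:ℝ), (0:ℝ)) + c • ((0:ℝ), (1:ℝ)) := by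
    simp [Prod.smul_mk]
  rw [h1, h2]
  simp only [map_add, _root_.map_smul, ContinuousLinearMap.add_apply,
    ContinuousLinearMap.coe_smul', Pi.smul_apply, smul_eq_mul]
  linear_combination (a * c) * hsym (1, 0) (0, 1)

end Stmt14Aux

/-- Inversion formula for the upward V-line transform, integrated form:
`f(x,y) = (sin β / 2) ∫_y^∞ [cot β ⋅ g_yy(x,t) − tan β ⋅ g_xx(x,t)] dt`. -/
theorem stmt14 (β : ℝ) (hβ : β ∈ Set.Ioo 0 (Real.pi / 2))
    (f : ℝ × ℝ → ℝ) (hf : ContDiff ℝ (⊤ : ℕ∞) f) (hsupp : HasCompactSupport f) (x y : ℝ) :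
    f (x, y) = (Real.sin β / 2) *
      ∫ t in Set.Ioi y,
        ((Real.cos β / Real.sin β) * deriv (deriv (fun b => vLineT β f x b)) t
          - Real.tan β * deriv (deriv (fun a => vLineT β f a t)) x) := by
  obtain ⟨hβ0, hβ2⟩ := hβ
  have hs : 0 < Real.sin β :=
    Real.sin_pos_of_pos_of_lt_pi hβ0 (hβ2.trans (half_lt_self Real.pi_pos))
  have hc : 0 < Real.cos β := Real.cos_pos_of_mem_Ioo ⟨by linarith [Real.pi_pos], hβ2⟩
  have htan : Real.tan β = Real.sin β / Real.cos β := Real.tan_eq_sin_div_cos β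
  set s := Real.sin β with hs_def
  set c := Real.cos β with hc_def
  have hs' : s ≠ 0 := ne_of_gt hs
  have hc' : c ≠ 0 := ne_of_gt hc
  -- derivative pairs
  have pairD : ∀ (φ : ℝ × ℝ → ℝ), ContDiff ℝ (⊤ : ℕ∞) φ → HasCompactSupport φ →
      ∀ (p₀ e : ℝ × ℝ) (w : ℝ),
      HasDerivAt (fun w : ℝ => (∫ t in Set.Ioi (0:ℝ), φ (p₀ + w • e + t • (s, c))) +
          ∫ t in Set.Ioi (0:ℝ), φ (p₀ + w • e + t • (-s, c)))
        ((∫ t in Set.Ioi (0:ℝ), fderiv ℝ φ (p₀ + w • e + t • (s, c)) e) +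
          ∫ t in Set.Ioi (0:ℝ), fderiv ℝ φ (p₀ + w • e + t • (-s, c)) e) w :=
    fun φ hφ hφs p₀ e w =>
      (Stmt14Aux.hasDerivAt_param hφ hφs s c hc p₀ e w).add
        (Stmt14Aux.hasDerivAt_param hφ hφs (-s) c hc p₀ e w)
  have hfy : ContDiff ℝ (⊤ : ℕ∞) (fun p : ℝ × ℝ => fderiv ℝ f p ((0:ℝ), (1:ℝ))) :=
    Stmt14Aux.pd_contDiff hf _
  have hfys : HasCompactSupport (fun p : ℝ × ℝ => fderiv ℝ f p ((0:ℝ), (1:ℝ))) :=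
    Stmt14Aux.pd_hcs hsupp _
  have hfx : ContDiff ℝ (⊤ : ℕ∞) (fun p : ℝ × ℝ => fderiv ℝ f p ((1:ℝ), (0:ℝ))) :=
    Stmt14Aux.pd_contDiff hf _
  have hfxs : HasCompactSupport (fun p : ℝ × ℝ => fderiv ℝ f p ((1:ℝ), (0:ℝ))) :=
    Stmt14Aux.pd_hcs hsupp _
  -- expressing the slices of vLineT
  have hvy : (fun b => vLineT β f x b) = fun w : ℝ =>
      (∫ t in Set.Ioi (0:ℝ), f (((x, (0:ℝ)) : ℝ × ℝ) + w • ((0:ℝ), (1:ℝ)) + t • (s, c))) +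
        ∫ t in Set.Ioi (0:ℝ), f (((x, (0:ℝ)) : ℝ × ℝ) + w • ((0:ℝ), (1:ℝ)) + t • (-s, c)) := by
    funext w
    have hp1 : ∀ t : ℝ, ((x, (0:ℝ)) : ℝ × ℝ) + w • ((0:ℝ), (1:ℝ)) + t • ((s, c) : ℝ × ℝ)
        = (x + t * s, w + t * c) := by
      intro t; simp only [Prod.smul_mk, smul_eq_mul, Prod.mk_add_mk, Prod.mk.injEq]; constructor <;> ring
    have hp2 : ∀ t : ℝ, ((x, (0:ℝ)) : ℝ × ℝ) + w • ((0:ℝ), (1:ℝ)) + t • ((-s, c) : ℝ × ℝ)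
        = (x - t * s, w + t * c) := by
      intro t; simp only [Prod.smul_mk, smul_eq_mul, Prod.mk_add_mk, Prod.mk.injEq]; constructor <;> ring
    simp only [vLineT, hp1, hp2]
    rfl
  have hvx : ∀ t : ℝ, (fun a => vLineT β f a t) = fun w : ℝ =>
      (∫ τ in Set.Ioi (0:ℝ), f ((((0:ℝ), t) : ℝ × ℝ) + w • ((1:ℝ), (0:ℝ)) + τ • (s, c))) +
        ∫ τ in Set.Ioi (0:ℝ), f ((((0:ℝ), t) : ℝ × ℝ) + w • ((1:ℝ), (0:ℝ)) + τ • (-s, c)) := by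
    intro t
    funext w
    have hp1 : ∀ τ : ℝ, (((0:ℝ), t) : ℝ × ℝ) + w • ((1:ℝ), (0:ℝ)) + τ • ((s, c) : ℝ × ℝ)
        = (w + τ * s, t + τ * c) := by
      intro τ; simp only [Prod.smul_mk, smul_eq_mul, Prod.mk_add_mk, Prod.mk.injEq]; constructor <;> ring
    have hp2 : ∀ τ : ℝ, (((0:ℝ), t) : ℝ × ℝ) + w • ((1:ℝ), (0:ℝ)) + τ • ((-s, c) : ℝ × ℝ)
        = (w - τ * s, t + τ * c) := by
      intro τ; simp only [Prod.smul_mk, smul_eq_mul, Prod.mk_add_mk, Prod.mk.injEq]; constructor <;> ring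
    simp only [vLineT, hp1, hp2]
    rfl
  -- first derivatives
  have hdy : deriv (fun b => vLineT β f x b) = fun w : ℝ =>
      (∫ t in Set.Ioi (0:ℝ),
        fderiv ℝ f (((x, (0:ℝ)) : ℝ × ℝ) + w • ((0:ℝ), (1:ℝ)) + t • (s, c)) ((0:ℝ), (1:ℝ))) +
      ∫ t in Set.Ioi (0:ℝ),
        fderiv ℝ f (((x, (0:ℝ)) : ℝ × ℝ) + w • ((0:ℝ), (1:ℝ)) + t • (-s, c)) ((0:ℝ), (1:ℝ)) := by
    rw [hvy]
    funext w
    exact (pairD f hf hsupp (x, 0) ((0:ℝ), (1:ℝ)) w).deriv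
  have hdx : ∀ t : ℝ, deriv (fun a => vLineT β f a t) = fun w : ℝ =>
      (∫ τ in Set.Ioi (0:ℝ),
        fderiv ℝ f ((((0:ℝ), t) : ℝ × ℝ) + w • ((1:ℝ), (0:ℝ)) + τ • (s, c)) ((1:ℝ), (0:ℝ))) +
      ∫ τ in Set.Ioi (0:ℝ),
        fderiv ℝ f ((((0:ℝ), t) : ℝ × ℝ) + w • ((1:ℝ), (0:ℝ)) + τ • (-s, c)) ((1:ℝ), (0:ℝ)) := by
    intro t
    rw [hvx t]
    funext w
    exact (pairD f hf hsupp ((0:ℝ), t) ((1:ℝ), (0:ℝ)) w).deriv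
  -- second derivatives
  have hpty : ∀ t : ℝ, ((x, (0:ℝ)) : ℝ × ℝ) + t • ((0:ℝ), (1:ℝ)) = ((x, t) : ℝ × ℝ) := by
    intro t; simp [Prod.ext_iff]
  have hptx : ∀ t : ℝ, (((0:ℝ), t) : ℝ × ℝ) + x • ((1:ℝ), (0:ℝ)) = ((x, t) : ℝ × ℝ) := by
    intro t; simp [Prod.ext_iff]
  have hddy : ∀ t : ℝ, deriv (deriv (fun b => vLineT β f x b)) t =
      (∫ τ in Set.Ioi (0:ℝ),
        fderiv ℝ (fun p => fderiv ℝ f p ((0:ℝ), (1:ℝ)))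
          (((x, t) : ℝ × ℝ) + τ • (s, c)) ((0:ℝ), (1:ℝ))) +
      ∫ τ in Set.Ioi (0:ℝ),
        fderiv ℝ (fun p => fderiv ℝ f p ((0:ℝ), (1:ℝ)))
          (((x, t) : ℝ × ℝ) + τ • (-s, c)) ((0:ℝ), (1:ℝ)) := by
    intro t
    rw [hdy]
    have h := (pairD _ hfy hfys (x, 0) ((0:ℝ), (1:ℝ)) t).deriv
    rw [h, hpty t]
  have hddx : ∀ t : ℝ, deriv (deriv (fun a => vLineT β f a t)) x =
      (∫ τ in Set.Ioi (0:ℝ),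
        fderiv ℝ (fun p => fderiv ℝ f p ((1:ℝ), (0:ℝ)))
          (((x, t) : ℝ × ℝ) + τ • (s, c)) ((1:ℝ), (0:ℝ))) +
      ∫ τ in Set.Ioi (0:ℝ),
        fderiv ℝ (fun p => fderiv ℝ f p ((1:ℝ), (0:ℝ)))
          (((x, t) : ℝ × ℝ) + τ • (-s, c)) ((1:ℝ), (0:ℝ)) := by
    intro t
    rw [hdx t]
    have h := (pairD _ hfx hfxs ((0:ℝ), t) ((1:ℝ), (0:ℝ)) x).deriv
    rw [h, hptx t]
  -- the pointwise PDE identity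
  have hpointwise : ∀ t : ℝ,
      (c / s) * deriv (deriv (fun b => vLineT β f x b)) t
        - Real.tan β * deriv (deriv (fun a => vLineT β f a t)) x
      = -(2 / s) * fderiv ℝ f ((x, t) : ℝ × ℝ) ((0:ℝ), (1:ℝ)) := by
    intro t
    rw [hddy t, hddx t, htan]
    -- integrability of the second-derivative integrands along rays
    have hiA : ∀ a : ℝ, Integrable (fun τ : ℝ =>
        fderiv ℝ (fun p => fderiv ℝ f p ((0:ℝ), (1:ℝ)))
          (((x, t) : ℝ × ℝ) + τ • (a, c)) ((0:ℝ), (1:ℝ)))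
        (volume.restrict (Set.Ioi (0:ℝ))) := by
      intro a
      apply Integrable.restrict
      apply Continuous.integrable_of_hasCompactSupport
      · apply ((Stmt14Aux.pd_contDiff hfy ((0:ℝ), (1:ℝ))).continuous).comp
        fun_prop
      · exact Stmt14Aux.comp_ray_hcs (Stmt14Aux.pd_hcs hfys ((0:ℝ), (1:ℝ))) _ a c hc
    have hiB : ∀ a : ℝ, Integrable (fun τ : ℝ =>
        fderiv ℝ (fun p => fderiv ℝ f p ((1:ℝ), (0:ℝ)))
          (((x, t) : ℝ × ℝ) + τ • (a, c)) ((1:ℝ), (0:ℝ)))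
        (volume.restrict (Set.Ioi (0:ℝ))) := by
      intro a
      apply Integrable.restrict
      apply Continuous.integrable_of_hasCompactSupport
      · apply ((Stmt14Aux.pd_contDiff hfx ((1:ℝ), (0:ℝ))).continuous).comp
        fun_prop
      · exact Stmt14Aux.comp_ray_hcs (Stmt14Aux.pd_hcs hfxs ((1:ℝ), (0:ℝ))) _ a c hc
    have hray : ∀ a : ℝ,
        c ^ 2 * (∫ τ in Set.Ioi (0:ℝ),
            fderiv ℝ (fun p => fderiv ℝ f p ((0:ℝ), (1:ℝ)))
              (((x, t) : ℝ × ℝ) + τ • (a, c)) ((0:ℝ), (1:ℝ)))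
          - a ^ 2 * (∫ τ in Set.Ioi (0:ℝ),
            fderiv ℝ (fun p => fderiv ℝ f p ((1:ℝ), (0:ℝ)))
              (((x, t) : ℝ × ℝ) + τ • (a, c)) ((1:ℝ), (0:ℝ)))
        = - fderiv ℝ f ((x, t) : ℝ × ℝ) (-a, c) := by
      intro a
      have h1 := Stmt14Aux.ray_ftc (Stmt14Aux.pd_contDiff hf (-a, c))
        (Stmt14Aux.pd_hcs hsupp (-a, c)) a c hc ((x, t) : ℝ × ℝ)
      rw [show (fun τ : ℝ => fderiv ℝ (fun p => fderiv ℝ f p (-a, c))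
            (((x, t) : ℝ × ℝ) + τ • (a, c)) (a, c))
          = fun τ : ℝ =>
            c ^ 2 * (fderiv ℝ (fun p => fderiv ℝ f p ((0:ℝ), (1:ℝ)))
              (((x, t) : ℝ × ℝ) + τ • (a, c)) ((0:ℝ), (1:ℝ)))
            - a ^ 2 * (fderiv ℝ (fun p => fderiv ℝ f p ((1:ℝ), (0:ℝ)))
              (((x, t) : ℝ × ℝ) + τ • (a, c)) ((1:ℝ), (0:ℝ)))
          from funext fun τ => Stmt14Aux.snd_deriv_expand hf _ a c] at h1
      rw [integral_sub ((hiA a).const_mul _) ((hiB a).const_mul _),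
        integral_const_mul, integral_const_mul] at h1
      exact h1
    have h1 := hray s
    have h2 := hray (-s)
    rw [neg_neg] at h2
    have hsum : fderiv ℝ f ((x, t) : ℝ × ℝ) (-s, c) + fderiv ℝ f ((x, t) : ℝ × ℝ) (s, c)
        = (2 * c) * fderiv ℝ f ((x, t) : ℝ × ℝ) ((0:ℝ), (1:ℝ)) := by
      rw [← ContinuousLinearMap.map_add]
      rw [show ((-s, c) : ℝ × ℝ) + (s, c) = (2 * c) • ((0:ℝ), (1:ℝ)) by
        simp [Prod.ext_iff]; ring]
      rw [ContinuousLinearMap.map_smul, smul_eq_mul]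
    have hkey : c ^ 2 * ((∫ τ in Set.Ioi (0:ℝ),
          fderiv ℝ (fun p => fderiv ℝ f p ((0:ℝ), (1:ℝ)))
            (((x, t) : ℝ × ℝ) + τ • (s, c)) ((0:ℝ), (1:ℝ))) +
          ∫ τ in Set.Ioi (0:ℝ),
            fderiv ℝ (fun p => fderiv ℝ f p ((0:ℝ), (1:ℝ)))
              (((x, t) : ℝ × ℝ) + τ • (-s, c)) ((0:ℝ), (1:ℝ)))
        - s ^ 2 * ((∫ τ in Set.Ioi (0:ℝ),
          fderiv ℝ (fun p => fderiv ℝ f p ((1:ℝ), (0:ℝ)))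
            (((x, t) : ℝ × ℝ) + τ • (s, c)) ((1:ℝ), (0:ℝ))) +
          ∫ τ in Set.Ioi (0:ℝ),
            fderiv ℝ (fun p => fderiv ℝ f p ((1:ℝ), (0:ℝ)))
              (((x, t) : ℝ × ℝ) + τ • (-s, c)) ((1:ℝ), (0:ℝ)))
        = -(2 * c) * fderiv ℝ f ((x, t) : ℝ × ℝ) ((0:ℝ), (1:ℝ)) := by
      linear_combination h1 + h2 - hsum
    set A1 := ∫ τ in Set.Ioi (0:ℝ),
      fderiv ℝ (fun p => fderiv ℝ f p ((0:ℝ), (1:ℝ))) (((x, t) : ℝ × ℝ) + τ • (s, c)) ((0:ℝ), (1:ℝ)) with hA1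
    set A2 := ∫ τ in Set.Ioi (0:ℝ),
      fderiv ℝ (fun p => fderiv ℝ f p ((0:ℝ), (1:ℝ))) (((x, t) : ℝ × ℝ) + τ • (-s, c)) ((0:ℝ), (1:ℝ)) with hA2
    set B1 := ∫ τ in Set.Ioi (0:ℝ),
      fderiv ℝ (fun p => fderiv ℝ f p ((1:ℝ), (0:ℝ))) (((x, t) : ℝ × ℝ) + τ • (s, c)) ((1:ℝ), (0:ℝ)) with hB1
    set B2 := ∫ τ in Set.Ioi (0:ℝ),
      fderiv ℝ (fun p => fderiv ℝ f p ((1:ℝ), (0:ℝ))) (((x, t) : ℝ × ℝ) + τ • (-s, c)) ((1:ℝ), (0:ℝ)) with hB2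
    set D := fderiv ℝ f ((x, t) : ℝ × ℝ) ((0:ℝ), (1:ℝ)) with hD
    have hstep : (c / s) * (A1 + A2) - (s / c) * (B1 + B2)
        = (c ^ 2 * (A1 + A2) - s ^ 2 * (B1 + B2)) / (s * c) := by
      field_simp
    rw [hstep, hkey]
    field_simp
  -- rewrite the main integral
  have hInt : (∫ t in Set.Ioi y,
        ((c / s) * deriv (deriv (fun b => vLineT β f x b)) t
          - Real.tan β * deriv (deriv (fun a => vLineT β f a t)) x))
      = ∫ t in Set.Ioi y, -(2 / s) * fderiv ℝ f ((x, t) : ℝ × ℝ) ((0:ℝ), (1:ℝ)) :=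
    integral_congr_ae (Eventually.of_forall fun t => hpointwise t)
  rw [hInt, integral_const_mul]
  -- vertical FTC
  have hψ : ∀ t : ℝ, HasDerivAt (fun t : ℝ => f (x, t))
      (fderiv ℝ f ((x, t) : ℝ × ℝ) ((0:ℝ), (1:ℝ))) t := by
    intro t
    have hpath : HasDerivAt (fun t : ℝ => ((x, t) : ℝ × ℝ)) ((0:ℝ), (1:ℝ)) t :=
      (hasDerivAt_const t x).prodMk (hasDerivAt_id t)
    exact ((hf.differentiable (by simp) _).hasFDerivAt).comp_hasDerivAt t hpath
  have hvertcs : HasCompactSupport (fun t : ℝ =>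
      fderiv ℝ f ((x, t) : ℝ × ℝ) ((0:ℝ), (1:ℝ))) :=
    Stmt14Aux.comp_vert_hcs hfys x
  have hvertcont : Continuous (fun t : ℝ =>
      fderiv ℝ f ((x, t) : ℝ × ℝ) ((0:ℝ), (1:ℝ))) := by
    apply (hfy.continuous).comp
    fun_prop
  have hFTC : (∫ t in Set.Ioi y, fderiv ℝ f ((x, t) : ℝ × ℝ) ((0:ℝ), (1:ℝ))) = - f (x, y) := by
    have h0 : Tendsto (fun t : ℝ => f (x, t)) atTop (𝓝 0) :=
      Stmt14Aux.hcs_tendsto (Stmt14Aux.comp_vert_hcs hsupp x)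
    have := integral_Ioi_of_hasDerivAt_of_tendsto' (a := y) (fun t _ => hψ t)
      (hvertcont.integrable_of_hasCompactSupport hvertcs).integrableOn h0
    simpa using this
  rw [hFTC]
  field_simp
end
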